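/- Let π be a policy sequence, p and p̂ two transition kernel sequences, and v ∈ ℝ^{X×A} with ‖v‖_∞ ≤ V. Define Λ^{i,n,π}_v : X → ℝ by Λ^{i,n,π}_v(x) := Σ_a π_i(a|x) Σ_y K_{i+1:n}(y)(x,a) v(y), where K_{i+1:n}(y)(x,a) is the probability of reaching state-action y at step n starting from (x,a) at step i under π, p. Then ⟨v, μ_n^{π,p} − μ_n^{π,p̂}⟩ = Σ_{i=1}^n Σ_{y∈X×A} μ_{i-1}^{π,p̂}(y) Σ_{x'} ( p_i(x'|y) − p̂_i(x'|y) ) Λ^{i,n,π}_v(x'), and moreover ‖Λ^{i,n,π}_v‖_∞ ≤ V. -/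
import Mathlib


open Finset

noncomputable section

variable {X A : Type*} [Fintype X] [Fintype A] [DecidableEq X] [DecidableEq A]

def IsDist {Y : Type*} [Fintype Y] (η : Y → ℝ) : Prop :=
  (∀ y, 0 ≤ η y) ∧ ∑ y, η y = 1

def stepK (p : ℕ → X → A → X → ℝ) (π : ℕ → X → A → ℝ) (n : ℕ) (η : X × A → ℝ) :
    X × A → ℝ := fun y => (∑ x, ∑ a, η (x, a) * p n x a y.1) * π n y.1 y.2

/-- `iterK p π i n η = η K_{i+1:n}`: apply the Markov kernels of steps `i+1, …, n`. -/
def iterK (p : ℕ → X → A → X → ℝ) (π : ℕ → X → A → ℝ) (i : ℕ) :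
    ℕ → (X × A → ℝ) → X × A → ℝ
  | 0 => fun η => η
  | n + 1 => fun η =>
      if i ≤ n then stepK p π (n + 1) (iterK p π i n η) else η

lemma iterK_zero (p : ℕ → X → A → X → ℝ) (π : ℕ → X → A → ℝ) (i : ℕ) (η : X × A → ℝ) :
    iterK p π i 0 η = η := rfl

lemma iterK_succ (p : ℕ → X → A → X → ℝ) (π : ℕ → X → A → ℝ) (i n : ℕ) (η : X × A → ℝ) :
    iterK p π i (n + 1) η =
      if i ≤ n then stepK p π (n + 1) (iterK p π i n η) else η := rfl

lemma stepK_sub (p : ℕ → X → A → X → ℝ) (π : ℕ → X → A → ℝ) (m : ℕ)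
    (η η' : X × A → ℝ) (y : X × A) :
    stepK p π m (fun z => η z - η' z) y = stepK p π m η y - stepK p π m η' y := by
  simp only [stepK, ← sub_mul, ← Finset.sum_sub_distrib]

lemma stepK_sum_smul {ι : Type*} (p : ℕ → X → A → X → ℝ) (π : ℕ → X → A → ℝ) (m : ℕ)
    (s : Finset ι) (c : ι → ℝ) (f : ι → X × A → ℝ) (y : X × A) :
    stepK p π m (fun z => ∑ j ∈ s, c j * f j z) y = ∑ j ∈ s, c j * stepK p π m (f j) y := by
  have h1 : ∀ x : X, ∑ a : A, (∑ j ∈ s, c j * f j (x, a)) * p m x a y.1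
      = ∑ j ∈ s, ∑ a : A, c j * f j (x, a) * p m x a y.1 := by
    intro x
    rw [Finset.sum_comm]
    exact Finset.sum_congr rfl fun a _ => Finset.sum_mul ..
  simp only [stepK, h1]
  rw [Finset.sum_comm, Finset.sum_mul]
  refine Finset.sum_congr rfl fun j _ => ?_
  have hcj : (∑ x : X, ∑ a : A, c j * f j (x, a) * p m x a y.1)
      = c j * ∑ x : X, ∑ a : A, f j (x, a) * p m x a y.1 := by
    simp only [Finset.mul_sum, mul_assoc]
  rw [hcj, mul_assoc]

lemma stepK_sum {ι : Type*} (p : ℕ → X → A → X → ℝ) (π : ℕ → X → A → ℝ) (m : ℕ)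
    (s : Finset ι) (f : ι → X × A → ℝ) (y : X × A) :
    stepK p π m (fun z => ∑ j ∈ s, f j z) y = ∑ j ∈ s, stepK p π m (f j) y := by
  have := stepK_sum_smul p π m s (fun _ => (1:ℝ)) f y
  simpa using this

lemma iterK_of_le (p : ℕ → X → A → X → ℝ) (π : ℕ → X → A → ℝ) {i n : ℕ} (h : n ≤ i)
    (η : X × A → ℝ) : iterK p π i n η = η := by
  induction n with
  | zero => rfl
  | succ m ih => rw [iterK_succ, if_neg (by omega)]

lemma iterK_eq_sum_dirac (p : ℕ → X → A → X → ℝ) (π : ℕ → X → A → ℝ) (i : ℕ) :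
    ∀ (n : ℕ) (η : X × A → ℝ) (y : X × A),
      iterK p π i n η y =
        ∑ z : X × A, η z * iterK p π i n (fun w => if w = z then 1 else 0) y := by
  intro n
  induction n with
  | zero =>
    intro η y
    simp [iterK_zero]
  | succ m ih =>
    intro η y
    by_cases h : i ≤ m
    · simp only [iterK_succ, if_pos h]
      have hη : iterK p π i m η = fun y' =>
          ∑ z : X × A, η z * iterK p π i m (fun w => if w = z then 1 else 0) y' := by
        funext y'; exact ih η y'
      rw [hη, stepK_sum_smul]
    · simp only [iterK_of_le p π (show m + 1 ≤ i by omega)]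
      simp

lemma stepK_isDist (p : ℕ → X → A → X → ℝ) (π : ℕ → X → A → ℝ) (m : ℕ)
    (hp : ∀ x a, IsDist (p m x a)) (hπ : ∀ x, IsDist (π m x))
    (η : X × A → ℝ) (hη : IsDist η) : IsDist (stepK p π m η) := by
  constructor
  · intro y
    apply mul_nonneg
    · apply Finset.sum_nonneg; intro x _
      apply Finset.sum_nonneg; intro a _
      exact mul_nonneg (hη.1 _) ((hp x a).1 _)
    · exact (hπ y.1).1 y.2
  · rw [Fintype.sum_prod_type]
    have h1 : ∀ x' : X, ∑ a' : A, stepK p π m η (x', a')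
        = ∑ x : X, ∑ a : A, η (x, a) * p m x a x' := by
      intro x'
      simp only [stepK, ← Finset.mul_sum]
      rw [(hπ x').2, mul_one]
    simp only [h1]
    rw [Finset.sum_comm]
    have h2 : ∀ x : X, ∑ x' : X, ∑ a : A, η (x, a) * p m x a x' = ∑ a : A, η (x, a) := by
      intro x
      rw [Finset.sum_comm]
      refine Finset.sum_congr rfl fun a _ => ?_
      rw [← Finset.mul_sum, (hp x a).2, mul_one]
    simp only [h2]
    rw [← Fintype.sum_prod_type]
    exact hη.2

lemma iterK_isDist (p : ℕ → X → A → X → ℝ) (π : ℕ → X → A → ℝ)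
    (hp : ∀ m x a, IsDist (p m x a)) (hπ : ∀ m x, IsDist (π m x)) (i : ℕ) :
    ∀ (n : ℕ) (η : X × A → ℝ), IsDist η → IsDist (iterK p π i n η) := by
  intro n
  induction n with
  | zero => intro η hη; exact hη
  | succ m ih =>
    intro η hη
    rw [iterK_succ]
    by_cases h : i ≤ m
    · rw [if_pos h]
      exact stepK_isDist p π (m + 1) (hp _) (hπ _) _ (ih η hη)
    · rw [if_neg h]; exact hη

lemma telescope (p phat : ℕ → X → A → X → ℝ) (π : ℕ → X → A → ℝ) (μ0 : X × A → ℝ) :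
    ∀ (n : ℕ) (y : X × A),
      iterK p π 0 n μ0 y - iterK phat π 0 n μ0 y =
        ∑ i ∈ Icc 1 n, iterK p π i n
          (fun z => stepK p π i (iterK phat π 0 (i - 1) μ0) z
                  - stepK phat π i (iterK phat π 0 (i - 1) μ0) z) y := by
  intro n
  induction n with
  | zero => intro y; simp [iterK_zero]
  | succ m ih =>
    intro y
    have h0 : (0 : ℕ) ≤ m := Nat.zero_le m
    rw [iterK_succ p π 0 m, iterK_succ phat π 0 m, if_pos h0, if_pos h0]
    have key : stepK p π (m + 1) (iterK p π 0 m μ0) y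
        - stepK phat π (m + 1) (iterK phat π 0 m μ0) y
        = stepK p π (m + 1)
            (fun z => iterK p π 0 m μ0 z - iterK phat π 0 m μ0 z) y
          + (stepK p π (m + 1) (iterK phat π 0 m μ0) y
             - stepK phat π (m + 1) (iterK phat π 0 m μ0) y) := by
      rw [stepK_sub]; ring
    rw [key]
    have hdiff : (fun z => iterK p π 0 m μ0 z - iterK phat π 0 m μ0 z)
        = fun z => ∑ i ∈ Icc 1 m, iterK p π i m
            (fun w => stepK p π i (iterK phat π 0 (i - 1) μ0) w
                    - stepK phat π i (iterK phat π 0 (i - 1) μ0) w) z := by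
      funext z; exact ih z
    rw [hdiff, stepK_sum]
    rw [show Icc 1 (m + 1) = insert (m + 1) (Icc 1 m) by
      ext j; simp [Finset.mem_Icc]; omega]
    rw [Finset.sum_insert (by simp [Finset.mem_Icc])]
    have hlast : iterK p π (m + 1) (m + 1)
        (fun z => stepK p π (m + 1) (iterK phat π 0 (m + 1 - 1) μ0) z
                - stepK phat π (m + 1) (iterK phat π 0 (m + 1 - 1) μ0) z) y
        = stepK p π (m + 1) (iterK phat π 0 m μ0) y
          - stepK phat π (m + 1) (iterK phat π 0 m μ0) y := by
      rw [iterK_of_le p π (le_refl (m + 1))]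
      norm_num
    rw [hlast]
    have hstep : ∀ i ∈ Icc 1 m,
        stepK p π (m + 1) (iterK p π i m
          (fun w => stepK p π i (iterK phat π 0 (i - 1) μ0) w
                  - stepK phat π i (iterK phat π 0 (i - 1) μ0) w)) y
        = iterK p π i (m + 1)
          (fun w => stepK p π i (iterK phat π 0 (i - 1) μ0) w
                  - stepK phat π i (iterK phat π 0 (i - 1) μ0) w) y := by
      intro i hi
      rw [Finset.mem_Icc] at hi
      rw [iterK_succ, if_pos hi.2]
    rw [Finset.sum_congr rfl hstep]
    ring

/-- `Λ^{i,n,π}_v(x) = Σ_a π_i(a|x) Σ_y K_{i+1:n}(y | x,a) v(y)`, where `K_{i+1:n}(· | x,a)`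
is the distribution at step `n` starting from the Dirac mass at `(x,a)` at step `i`. -/
def Lam (p : ℕ → X → A → X → ℝ) (π : ℕ → X → A → ℝ) (v : X × A → ℝ)
    (i n : ℕ) (x : X) : ℝ :=
  ∑ a, π i x a *
    ∑ y : X × A, iterK p π i n (fun z => if z = (x, a) then 1 else 0) y * v y

lemma per_i (p phat : ℕ → X → A → X → ℝ) (π : ℕ → X → A → ℝ) (v : X × A → ℝ)
    (i n : ℕ) (ηh : X × A → ℝ) :
    ∑ y : X × A, v y * iterK p π i n
        (fun z => stepK p π i ηh z - stepK phat π i ηh z) y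
    = ∑ w : X × A, ηh w *
        ∑ x', (p i w.1 w.2 x' - phat i w.1 w.2 x') * Lam p π v i n x' := by
  have h1 : ∀ y, iterK p π i n (fun z => stepK p π i ηh z - stepK phat π i ηh z) y
      = ∑ z : X × A, (stepK p π i ηh z - stepK phat π i ηh z) *
          iterK p π i n (fun w => if w = z then 1 else 0) y :=
    fun y => iterK_eq_sum_dirac p π i n _ y
  have hΔ : ∀ (x' : X) (a : A), stepK p π i ηh (x', a) - stepK phat π i ηh (x', a)
      = (∑ w : X × A, ηh w * (p i w.1 w.2 x' - phat i w.1 w.2 x')) * π i x' a := by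
    intro x' a
    simp only [stepK, Fintype.sum_prod_type, ← sub_mul, ← Finset.sum_sub_distrib, ← mul_sub]
  calc ∑ y : X × A, v y * iterK p π i n
          (fun z => stepK p π i ηh z - stepK phat π i ηh z) y
      = ∑ z : X × A, (stepK p π i ηh z - stepK phat π i ηh z) *
          ∑ y : X × A, iterK p π i n (fun w => if w = z then 1 else 0) y * v y := by
        simp only [h1, Finset.mul_sum]
        rw [Finset.sum_comm]
        refine Finset.sum_congr rfl fun z _ => ?_
        exact Finset.sum_congr rfl fun y _ => by ring
    _ = ∑ x' : X, (∑ w : X × A, ηh w * (p i w.1 w.2 x' - phat i w.1 w.2 x')) *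
          Lam p π v i n x' := by
        rw [Fintype.sum_prod_type]
        refine Finset.sum_congr rfl fun x' _ => ?_
        rw [Lam, Finset.mul_sum]
        refine Finset.sum_congr rfl fun a _ => ?_
        rw [hΔ x' a]
        ring
    _ = ∑ w : X × A, ηh w *
          ∑ x', (p i w.1 w.2 x' - phat i w.1 w.2 x') * Lam p π v i n x' := by
        simp only [Finset.sum_mul]
        rw [Finset.sum_comm]
        refine Finset.sum_congr rfl fun w _ => ?_
        rw [Finset.mul_sum]
        exact Finset.sum_congr rfl fun x' _ => by ring

/-- Decomposition of `⟨v, μ_n^{π,p} − μ_n^{π,p̂}⟩` through the functions `Λ^{i,n,π}_v`,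
together with the sup-norm bound `‖Λ^{i,n,π}_v‖_∞ ≤ V` whenever `‖v‖_∞ ≤ V`. -/
theorem inner_occ_diff_decomposition (N : ℕ)
    (μ0 : X × A → ℝ) (hμ0 : IsDist μ0)
    (p phat : ℕ → X → A → X → ℝ)
    (hp : ∀ n x a, IsDist (p n x a)) (hphat : ∀ n x a, IsDist (phat n x a))
    (π : ℕ → X → A → ℝ) (hπ : ∀ n x, IsDist (π n x))
    (v : X × A → ℝ) (V : ℝ) (hv : ∀ y, |v y| ≤ V)
    (n : ℕ) (hn1 : 1 ≤ n) (hn : n ≤ N) :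
    (∑ y : X × A, v y * (iterK p π 0 n μ0 y - iterK phat π 0 n μ0 y) =
        ∑ i ∈ Icc 1 n, ∑ y : X × A,
          iterK phat π 0 (i - 1) μ0 y *
            ∑ x', (p i y.1 y.2 x' - phat i y.1 y.2 x') * Lam p π v i n x') ∧
      ∀ i x, 1 ≤ i → i ≤ n → |Lam p π v i n x| ≤ V := by
  constructor
  · have ht : ∀ y, iterK p π 0 n μ0 y - iterK phat π 0 n μ0 y =
        ∑ i ∈ Icc 1 n, iterK p π i n
          (fun z => stepK p π i (iterK phat π 0 (i - 1) μ0) z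
                  - stepK phat π i (iterK phat π 0 (i - 1) μ0) z) y :=
      telescope p phat π μ0 n
    simp only [ht, Finset.mul_sum]
    rw [Finset.sum_comm]
    refine Finset.sum_congr rfl fun i _ => ?_
    refine (per_i p phat π v i n (iterK phat π 0 (i - 1) μ0)).trans ?_
    exact Finset.sum_congr rfl fun w _ => Finset.mul_sum ..
  · intro i x hi1 hin
    have hA : Nonempty A := by
      by_contra hA
      rw [not_nonempty_iff] at hA
      have h2 := (hπ i x).2
      rw [Finset.univ_eq_empty, Finset.sum_empty] at h2
      norm_num at h2
    obtain ⟨a0⟩ := hA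
    have hV : 0 ≤ V := le_trans (abs_nonneg _) (hv (x, a0))
    have hKd : ∀ a : A, IsDist (iterK p π i n (fun z => if z = (x, a) then 1 else 0)) := by
      intro a
      refine iterK_isDist p π hp hπ i n _ ⟨fun z => ?_, ?_⟩
      · by_cases h : z = (x, a) <;> simp [h]
      · simp
    have hS : ∀ a : A, |∑ y : X × A,
        iterK p π i n (fun z => if z = (x, a) then 1 else 0) y * v y| ≤ V := by
      intro a
      calc |∑ y : X × A, iterK p π i n (fun z => if z = (x, a) then 1 else 0) y * v y|
          ≤ ∑ y : X × A, |iterK p π i n (fun z => if z = (x, a) then 1 else 0) y * v y| :=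
            Finset.abs_sum_le_sum_abs _ _
        _ ≤ ∑ y : X × A, iterK p π i n (fun z => if z = (x, a) then 1 else 0) y * V := by
            refine Finset.sum_le_sum fun y _ => ?_
            rw [abs_mul, abs_of_nonneg ((hKd a).1 y)]
            exact mul_le_mul_of_nonneg_left (hv y) ((hKd a).1 y)
        _ = V := by rw [← Finset.sum_mul, (hKd a).2, one_mul]
    rw [Lam]
    calc |∑ a : A, π i x a *
            ∑ y : X × A, iterK p π i n (fun z => if z = (x, a) then 1 else 0) y * v y|
        ≤ ∑ a : A, |π i x a *
            ∑ y : X × A, iterK p π i n (fun z => if z = (x, a) then 1 else 0) y * v y| :=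
          Finset.abs_sum_le_sum_abs _ _
      _ ≤ ∑ a : A, π i x a * V := by
          refine Finset.sum_le_sum fun a _ => ?_
          rw [abs_mul, abs_of_nonneg ((hπ i x).1 a)]
          exact mul_le_mul_of_nonneg_left (hS a) ((hπ i x).1 a)
      _ = V := by rw [← Finset.sum_mul, (hπ i x).2, one_mul]
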